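/- For every natural number n, ∫_0^4 x^n · (1/π) · 1/√(x(4-x)) dx = (2n choose n), the n-th central binomial coefficient. -/

import Mathlib

/-!
Substitute `x = c sin² θ` with `θ ∈ (0, π/2)`. Then `√(x (c - x)) = c sin θ cos θ` is exactly half
of `dx/dθ`, so `∫₀^c xⁿ / √(x (c - x)) dx = 2 cⁿ ∫₀^{π/2} sin^{2n} θ dθ`. By the symmetry
`θ ↦ π - θ` this is `cⁿ` times the Wallis integral `∫₀^π sin^{2n} = π C(2n, n) / 4ⁿ`.
-/

open Real MeasureTheory Set Finset

theorem prod_range_odd_div_even_eq_centralBinom_div_four_pow (n : ℕ) :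
    ∏ i ∈ range n, (2 * (i : ℝ) + 1) / (2 * i + 2) = Nat.centralBinom n / 4 ^ n := by
  induction n with
  | zero => simp
  | succ k ih =>
    have hrec : ((k : ℝ) + 1) * Nat.centralBinom (k + 1)
        = 2 * (2 * k + 1) * Nat.centralBinom k := by
      exact_mod_cast Nat.succ_mul_centralBinom_succ k
    rw [prod_range_succ, ih]
    field_simp
    linear_combination (-2 * (4 : ℝ) ^ k) * hrec

theorem integral_sin_pow_two_mul_eq_centralBinom (n : ℕ) :
    ∫ x in 0..π, sin x ^ (2 * n) = π * Nat.centralBinom n / 4 ^ n := by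
  rw [integral_sin_pow_even, prod_range_odd_div_even_eq_centralBinom_div_four_pow, mul_div_assoc]

theorem integral_sin_pow_zero_pi_div_two (k : ℕ) :
    ∫ x in 0..π / 2, sin x ^ k = (∫ x in 0..π, sin x ^ k) / 2 := by
  have hint : ∀ a b : ℝ, IntervalIntegrable (fun x => sin x ^ k) volume a b :=
    fun a b => (continuous_sin.pow k).intervalIntegrable a b
  have hreflect : ∫ x in π / 2..π, sin x ^ k = ∫ x in 0..π / 2, sin x ^ k := by
    have := intervalIntegral.integral_comp_sub_left (fun x => sin x ^ k) π (a := 0) (b := π / 2)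
    simp only [sin_pi_sub, sub_zero, sub_half] at this
    exact this.symm
  rw [← intervalIntegral.integral_add_adjacent_intervals (hint 0 (π / 2)) (hint (π / 2) π),
    hreflect]
  ring

theorem strictMonoOn_mul_sin_sq {c : ℝ} (hc : 0 < c) :
    StrictMonoOn (fun θ => c * sin θ ^ 2) (Icc 0 (π / 2)) := by
  intro a ha b hb hab
  have hsin : sin a < sin b :=
    strictMonoOn_sin ⟨by linarith [ha.1, pi_pos], ha.2⟩ ⟨by linarith [hb.1, pi_pos], hb.2⟩ hab
  have ha0 : 0 ≤ sin a := sin_nonneg_of_nonneg_of_le_pi ha.1 (by linarith [ha.2, pi_pos])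
  dsimp only
  gcongr

theorem image_mul_sin_sq_Ioo {c : ℝ} (hc : 0 < c) :
    (fun θ => c * sin θ ^ 2) '' Ioo 0 (π / 2) = Ioo 0 c := by
  rw [(by fun_prop : Continuous fun θ => c * sin θ ^ 2).continuousOn.image_Ioo_of_strictMonoOn
    (by positivity) (strictMonoOn_mul_sin_sq hc)]
  simp

theorem abs_two_mul_sin_mul_cos_mul_pow_div_sqrt {c θ : ℝ} (hc : 0 < c)
    (hθ : θ ∈ Ioo 0 (π / 2)) (n : ℕ) :
    |2 * c * sin θ * cos θ| * ((c * sin θ ^ 2) ^ n / √(c * sin θ ^ 2 * (c - c * sin θ ^ 2)))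
      = 2 * c ^ n * sin θ ^ (2 * n) := by
  have hsin : 0 < sin θ := sin_pos_of_pos_of_lt_pi hθ.1 (by linarith [hθ.2, pi_pos])
  have hcos : 0 < cos θ := cos_pos_of_mem_Ioo ⟨by linarith [hθ.1, pi_pos], hθ.2⟩
  have hsqrt : √(c * sin θ ^ 2 * (c - c * sin θ ^ 2)) = c * sin θ * cos θ := by
    rw [← sqrt_sq (by positivity : 0 ≤ c * sin θ * cos θ)]
    congr 1
    linear_combination -c ^ 2 * sin θ ^ 2 * sin_sq_add_cos_sq θ
  rw [abs_of_pos (by positivity), hsqrt, mul_pow, pow_mul]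
  field_simp

theorem integral_pow_div_sqrt_mul_sub {c : ℝ} (hc : 0 < c) (n : ℕ) :
    ∫ x in 0..c, x ^ n / √(x * (c - x)) = π * (c / 4) ^ n * Nat.centralBinom n := by
  have hderiv : ∀ θ ∈ Ioo 0 (π / 2),
      HasDerivWithinAt (fun θ => c * sin θ ^ 2) (2 * c * sin θ * cos θ) (Ioo 0 (π / 2)) θ := by
    intro θ _
    refine (((hasDerivAt_sin θ).fun_pow 2).const_mul c).hasDerivWithinAt.congr_deriv ?_
    push_cast
    ring
  calc ∫ x in 0..c, x ^ n / √(x * (c - x))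
      = ∫ x in (fun θ => c * sin θ ^ 2) '' Ioo 0 (π / 2), x ^ n / √(x * (c - x)) := by
        rw [intervalIntegral.integral_of_le hc.le, integral_Ioc_eq_integral_Ioo,
          image_mul_sin_sq_Ioo hc]
    _ = ∫ θ in Ioo 0 (π / 2), 2 * c ^ n * sin θ ^ (2 * n) := by
        rw [integral_image_eq_integral_abs_deriv_smul measurableSet_Ioo hderiv
          ((strictMonoOn_mul_sin_sq hc).injOn.mono Ioo_subset_Icc_self)]
        exact setIntegral_congr_fun measurableSet_Ioo fun θ hθ =>
          abs_two_mul_sin_mul_cos_mul_pow_div_sqrt hc hθ n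
    _ = 2 * c ^ n * ∫ θ in 0..π / 2, sin θ ^ (2 * n) := by
        rw [integral_const_mul, intervalIntegral.integral_of_le (by positivity),
          integral_Ioc_eq_integral_Ioo]
    _ = π * (c / 4) ^ n * Nat.centralBinom n := by
        rw [integral_sin_pow_zero_pi_div_two, integral_sin_pow_two_mul_eq_centralBinom, div_pow]
        field_simp

theorem arcsine_density_moments (n : ℕ) :
    ∫ x in (0:ℝ)..4, x ^ n * (1 / π) * (1 / Real.sqrt (x * (4 - x)))
      = Nat.centralBinom n := by
  have hintegrand : ∀ x : ℝ,
      x ^ n * (1 / π) * (1 / √(x * (4 - x))) = π⁻¹ * (x ^ n / √(x * (4 - x))) :=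
    fun x => by ring
  simp_rw [hintegrand]
  rw [intervalIntegral.integral_const_mul, integral_pow_div_sqrt_mul_sub four_pos n]
  simp [pi_ne_zero]
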